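/- arXiv:1305.4704 — 2 statements merged into one kernel-verified Lean document; each statement's English description precedes it below -/
import Mathlib

section
/- Let {(x^t, y^t, z^t)} be generated by the proximal AMA with parameters β>0, γ>0, T ⪰ 0, let μ>0, and let (x̄, ȳ, z̄) satisfy assumption A1. Write w_e^t = w^t − w̄ for w ∈ {x,y,z} and S = 2Σ_f − (β+μ)A*A. Then for every t ≥ 0 and every α > 0: ((1/(γβ))‖z_e^t‖² + ‖y_e^t‖²_T) − ((1/(γβ))‖z_e^{t+1}‖² + ‖y_e^{t+1}‖²_T) ≥ ‖x_e^{t+1}‖²_S + 2‖y_e^{t+1}‖²_{Σ_g} + ‖y^{t+1} − y^t‖²_T + (β − α)‖By_e^{t+1}‖² + (1/(γ²β))(min{α,μ}/(2β) + 1 − γ)‖z^{t+1} − z^t‖². -/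
/-!
The updates are first-order optimality conditions: `A* z^t ∈ ∂f(x^{t+1})` and, as the
`y`-subproblem is `g` plus a smooth function, `B*(z^t − β r) − T(y^{t+1} − y^t) ∈ ∂g(y^{t+1})`,
where `r = A x_e^{t+1} + B y_e^{t+1}` is the residual. Pairing these with `A* z̄ ∈ ∂f(x̄)` and
`B* z̄ ∈ ∂g(ȳ)` through the strong monotonicity of the subdifferentials, and expanding
`z_e^{t+1} = z_e^t − γβ r` and `y_e^t = y_e^{t+1} − (y^{t+1} − y^t)`, everything cancels except for
the elementary bound `min{α,μ} ‖a + b‖² ≤ 2 (μ ‖a‖² + α ‖b‖²)` with `a = A x_e^{t+1}`,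
`b = B y_e^{t+1}`.
-/

open RealInnerProductSpace

/-- `v` is a subgradient of the extended-real-valued function `f` at `x`. -/
def IsSubgradAt {E : Type*} [NormedAddCommGroup E] [InnerProductSpace ℝ E]
    (f : E → EReal) (v x : E) : Prop :=
  ∀ u, f x + ((⟪v, u - x⟫ : ℝ) : EReal) ≤ f u

theorem EReal.add_coe_sub_le_of_add_coe_le_add_coe {p q : EReal} {a b : ℝ}
    (h : p + a ≤ q + b) : p + ((a - b : ℝ) : EReal) ≤ q := by
  have h' := add_le_add h (le_refl ((-b : ℝ) : EReal))
  rwa [add_assoc, add_assoc, ← EReal.coe_add, ← EReal.coe_add, add_neg_cancel,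
    EReal.coe_zero, add_zero, ← sub_eq_add_neg] at h'

theorem le_of_hasDerivWithinAt_of_forall_mul_le {φ : ℝ → ℝ} {φ' c : ℝ}
    (hφ : HasDerivWithinAt φ φ' (Set.Ioi 0) 0)
    (h : ∀ s ∈ Set.Ioc (0 : ℝ) 1, s * c ≤ φ s - φ 0) : c ≤ φ' := by
  have hslope := (hasDerivWithinAt_iff_tendsto_slope' Set.self_notMem_Ioi).1 hφ
  refine ge_of_tendsto hslope ?_
  filter_upwards [Ioc_mem_nhdsGT zero_lt_one] with s hs
  rw [slope_def_field, sub_zero, le_div_iff₀ hs.1, mul_comm]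
  exact h s hs

theorem min_mul_norm_add_sq_le {E : Type*} [SeminormedAddCommGroup E] {α μ : ℝ}
    (hα : 0 ≤ α) (hμ : 0 ≤ μ) (a b : E) :
    min α μ * ‖a + b‖ ^ 2 ≤ 2 * (μ * ‖a‖ ^ 2 + α * ‖b‖ ^ 2) := by
  have hab : ‖a + b‖ ^ 2 ≤ 2 * (‖a‖ ^ 2 + ‖b‖ ^ 2) := by
    nlinarith [norm_add_le a b, norm_nonneg (a + b), sq_nonneg (‖a‖ - ‖b‖)]
  calc min α μ * ‖a + b‖ ^ 2 ≤ min α μ * (2 * (‖a‖ ^ 2 + ‖b‖ ^ 2)) :=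
        mul_le_mul_of_nonneg_left hab (le_min hα hμ)
    _ ≤ 2 * (μ * ‖a‖ ^ 2 + α * ‖b‖ ^ 2) := by
        nlinarith [min_le_left α μ, min_le_right α μ, sq_nonneg ‖a‖, sq_nonneg ‖b‖]

section InnerProductSpace

variable {E : Type*} [NormedAddCommGroup E] [InnerProductSpace ℝ E]

theorem norm_sub_smul_sq (u r : E) (s : ℝ) :
    ‖u - s • r‖ ^ 2 = ‖u‖ ^ 2 - 2 * s * ⟪u, r⟫ + s ^ 2 * ‖r‖ ^ 2 := by
  rw [norm_sub_sq_real, real_inner_smul_right, norm_smul, mul_pow, Real.norm_eq_abs, sq_abs]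
  ring

theorem inner_sub_map_sub_of_symm {T : E →L[ℝ] E} (hT : ∀ u v : E, ⟪T u, v⟫ = ⟪u, T v⟫)
    (u d : E) : ⟪u - d, T (u - d)⟫ = ⟪u, T u⟫ - 2 * ⟪T d, u⟫ + ⟪d, T d⟫ := by
  rw [map_sub, inner_sub_left, inner_sub_right, inner_sub_right, ← hT d u,
    real_inner_comm (T d) u]
  ring

theorem isSubgradAt_of_forall_add_neg_inner_le {f : E → EReal} {v x : E}
    (h : ∀ u, f x + ((-⟪v, x⟫ : ℝ) : EReal) ≤ f u + ((-⟪v, u⟫ : ℝ) : EReal)) :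
    IsSubgradAt f v x := by
  intro u
  convert EReal.add_coe_sub_le_of_add_coe_le_add_coe (h u) using 3
  rw [inner_sub_right]; ring

theorem HasGradientAt.isSubgradAt_neg_of_forall_add_le [CompleteSpace E]
    {g : E → EReal} {h : E → ℝ} {x w : E} (hh : HasGradientAt h w x)
    (hg_ne_bot : ∀ u, g u ≠ ⊥)
    (hg_cvx : ∀ (u₁ u₂ : E) (a b : ℝ), 0 ≤ a → 0 ≤ b → a + b = 1 →
      g (a • u₁ + b • u₂) ≤ (a : EReal) * g u₁ + (b : EReal) * g u₂)
    (hmin : ∀ u, g x + (h x : EReal) ≤ g u + (h u : EReal)) :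
    IsSubgradAt g (-w) x := by
  intro u
  by_cases hgu : g u = ⊤
  · rw [hgu]; exact le_top
  lift g u to ℝ using ⟨hgu, hg_ne_bot u⟩ with a ha
  have hgx : g x ≠ ⊤ := by
    intro hgx
    have := hmin u
    rw [hgx, EReal.top_add_coe, ← ha, ← EReal.coe_add, top_le_iff] at this
    exact EReal.coe_ne_top _ this
  lift g x to ℝ using ⟨hgx, hg_ne_bot x⟩ with b hb
  set d := u - x
  have hline : HasDerivWithinAt (fun s : ℝ => h (x + s • d)) ⟪w, d⟫ (Set.Ioi 0) 0 := by
    have hl : HasDerivAt (fun s : ℝ => x + s • d) d 0 := by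
      simpa using ((hasDerivAt_id (0 : ℝ)).smul_const d).const_add x
    have hh' : HasFDerivAt h (InnerProductSpace.toDual ℝ E w) (x + (0 : ℝ) • d) := by
      simpa [hasGradientAt_iff_hasFDerivAt] using hh
    exact (hh'.comp_hasDerivAt (0 : ℝ) hl).hasDerivWithinAt
  -- convexity of `g` on the segment `[x, u]` and minimality of `x` bound the chord slopes of `h`
  have hchord : ∀ s ∈ Set.Ioc (0 : ℝ) 1,
      s * (b - a) ≤ h (x + s • d) - h (x + (0 : ℝ) • d) := by
    rintro s ⟨hs0, hs1⟩
    have hconv := hg_cvx u x s (1 - s) hs0.le (by linarith) (by ring)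
    rw [← ha, ← hb, ← EReal.coe_mul, ← EReal.coe_mul, ← EReal.coe_add,
      show s • u + (1 - s) • x = x + s • d by simp only [d]; module] at hconv
    have hle := (hmin (x + s • d)).trans (add_le_add hconv le_rfl)
    rw [← EReal.coe_add, ← EReal.coe_add, EReal.coe_le_coe_iff] at hle
    rw [zero_smul, add_zero]
    linarith
  have hslope := le_of_hasDerivWithinAt_of_forall_mul_le hline hchord
  rw [← EReal.coe_add, EReal.coe_le_coe_iff, inner_neg_left]
  linarith

end InnerProductSpace

section ProximalAMA

variable {X Y Z : Type*} [NormedAddCommGroup X] [InnerProductSpace ℝ X]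
  [NormedAddCommGroup Y] [InnerProductSpace ℝ Y] [NormedAddCommGroup Z] [InnerProductSpace ℝ Z]

theorem hasGradientAt_proxAMA_subproblem [CompleteSpace Y] [CompleteSpace Z]
    (B : Y →L[ℝ] Z) (T : Y →L[ℝ] Y) (hT : ∀ u v : Y, ⟪T u, v⟫ = ⟪u, T v⟫)
    (z a c : Z) (y₀ u : Y) (β : ℝ) :
    HasGradientAt
      (fun v => -⟪z, B v⟫ + β / 2 * ‖a + B v - c‖ ^ 2 + 1 / 2 * ⟪v - y₀, T (v - y₀)⟫)
      (T (u - y₀) - ContinuousLinearMap.adjoint B (z - β • (a + B u - c))) u := by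
  have h1 := (hasFDerivAt_const z u).inner ℝ B.hasFDerivAt
  have h2 := (((hasFDerivAt_const a u).add B.hasFDerivAt).sub_const c).norm_sq
  have h3 := ((hasFDerivAt_id u).sub_const y₀).inner ℝ
    (T.hasFDerivAt.comp u ((hasFDerivAt_id u).sub_const y₀))
  rw [hasGradientAt_iff_hasFDerivAt]
  refine ((h1.neg.add (h2.const_mul (β / 2))).add (h3.const_mul (1 / 2))).congr_fderiv ?_
  ext d
  simp only [Pi.add_apply, map_sub, map_add, zero_add, ContinuousLinearMap.sub_comp,
    ContinuousLinearMap.add_comp, one_div, id_eq, Function.comp_apply,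
    ContinuousLinearMap.comp_id, add_apply, neg_apply,
    ContinuousLinearMap.comp_apply, ContinuousLinearMap.prod_apply,
    zero_apply, fderivInnerCLM_apply, inner_zero_left, add_zero,
    smul_apply, sub_apply, coe_innerSL_apply, nsmul_eq_mul,
    Nat.cast_ofNat, smul_eq_mul, ContinuousLinearMap.id_apply, inner_sub_left, map_smul,
    InnerProductSpace.toDual_apply_apply, hT, ContinuousLinearMap.adjoint_inner_left]
  rw [← map_sub, real_inner_comm (T (u - y₀)) d, hT, inner_sub_left]
  ring

theorem proxAMA_descent (A : X →L[ℝ] Z) (B : Y →L[ℝ] Z) (Sf : X →L[ℝ] X) (Sg T : Y →L[ℝ] Y)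
    (hT : ∀ u v : Y, ⟪T u, v⟫ = ⟪u, T v⟫) {α β γ μ : ℝ} (hα : 0 ≤ α) (hβ : β ≠ 0) (hγ : γ ≠ 0)
    (hμ : 0 ≤ μ) {x' xb : X} {y y' yb : Y} {z z' zb : Z}
    (hz : z' = z - (γ * β) • (A (x' - xb) + B (y' - yb)))
    (hf_mono : ⟪x' - xb, Sf (x' - xb)⟫ ≤ ⟪z - zb, A (x' - xb)⟫)
    (hg_mono : ⟪y' - yb, Sg (y' - yb)⟫
      ≤ ⟪z - zb - β • (A (x' - xb) + B (y' - yb)), B (y' - yb)⟫ - ⟪T (y' - y), y' - yb⟫) :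
    (2 * ⟪x' - xb, Sf (x' - xb)⟫ - (β + μ) * ‖A (x' - xb)‖ ^ 2)
        + 2 * ⟪y' - yb, Sg (y' - yb)⟫
        + ⟪y' - y, T (y' - y)⟫
        + (β - α) * ‖B (y' - yb)‖ ^ 2
        + 1 / (γ ^ 2 * β) * (min α μ / (2 * β) + 1 - γ) * ‖z' - z‖ ^ 2
      ≤ (1 / (γ * β) * ‖z - zb‖ ^ 2 + ⟪y - yb, T (y - yb)⟫)
        - (1 / (γ * β) * ‖z' - zb‖ ^ 2 + ⟪y' - yb, T (y' - yb)⟫) := by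
  set a := A (x' - xb)
  set b := B (y' - yb)
  have hz_err : z' - zb = (z - zb) - (γ * β) • (a + b) := by rw [hz]; abel
  have hz_incr : z' - z = -((γ * β) • (a + b)) := by rw [hz]; abel
  have hdual : 1 / (γ * β) * ‖z - zb‖ ^ 2 - 1 / (γ * β) * ‖z' - zb‖ ^ 2
      = 2 * (⟪z - zb, a⟫ + ⟪z - zb, b⟫) - γ * β * ‖a + b‖ ^ 2 := by
    rw [hz_err, norm_sub_smul_sq, inner_add_right]; field_simp; ring
  have hcoef : 1 / (γ ^ 2 * β) * (min α μ / (2 * β) + 1 - γ) * ‖z' - z‖ ^ 2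
      = (min α μ / 2 + β - γ * β) * ‖a + b‖ ^ 2 := by
    rw [hz_incr, norm_neg, norm_smul, mul_pow, Real.norm_eq_abs, sq_abs]; field_simp
  have hprox : ⟪y - yb, T (y - yb)⟫
      = ⟪y' - yb, T (y' - yb)⟫ - 2 * ⟪T (y' - y), y' - yb⟫ + ⟪y' - y, T (y' - y)⟫ := by
    rw [← inner_sub_map_sub_of_symm hT, sub_sub_sub_cancel_left]
  have hy_rhs : ⟪z - zb - β • (a + b), b⟫ = ⟪z - zb, b⟫ - β * (⟪a, b⟫ + ‖b‖ ^ 2) := by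
    rw [inner_sub_left, real_inner_smul_left, inner_add_left, real_inner_self_eq_norm_sq]
  have hyoung := min_mul_norm_add_sq_le hα hμ a b
  rw [hcoef, hprox, norm_add_sq_real]
  rw [norm_add_sq_real] at hdual hyoung
  linarith

end ProximalAMA

theorem stmt_1_general
    {X Y Z : Type*}
    [NormedAddCommGroup X] [InnerProductSpace ℝ X] [FiniteDimensional ℝ X]
    [NormedAddCommGroup Y] [InnerProductSpace ℝ Y] [FiniteDimensional ℝ Y]
    [NormedAddCommGroup Z] [InnerProductSpace ℝ Z] [FiniteDimensional ℝ Z]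
    (f : X → EReal) (g : Y → EReal)
    -- `f` and `g` are proper
    (hg_ne_bot : ∀ y, g y ≠ ⊥)
    -- `f` and `g` are convex
    (hg_cvx : ∀ (y₁ y₂ : Y) (a b : ℝ), 0 ≤ a → 0 ≤ b → a + b = 1 →
      g (a • y₁ + b • y₂) ≤ (a : EReal) * g y₁ + (b : EReal) * g y₂)
    (A : X →L[ℝ] Z) (B : Y →L[ℝ] Z) (c : Z)
    (Sf : X →L[ℝ] X) (Sg : Y →L[ℝ] Y) (T : Y →L[ℝ] Y)
    -- `Sf ≻ 0`, `Sg ⪰ 0`, `T ⪰ 0` are self-adjoint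
    (hT_sa : ∀ u v : Y, ⟪T u, v⟫ = ⟪u, T v⟫)
    -- the subdifferential monotonicity conditions on `f` and `g`
    (hf_mono : ∀ (x₁ x₂ u₁ u₂ : X), IsSubgradAt f u₁ x₁ → IsSubgradAt f u₂ x₂ →
      ⟪x₁ - x₂, Sf (x₁ - x₂)⟫ ≤ ⟪u₁ - u₂, x₁ - x₂⟫)
    (hg_mono : ∀ (y₁ y₂ v₁ v₂ : Y), IsSubgradAt g v₁ y₁ → IsSubgradAt g v₂ y₂ →
      ⟪y₁ - y₂, Sg (y₁ - y₂)⟫ ≤ ⟪v₁ - v₂, y₁ - y₂⟫)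
    (β γ : ℝ) (hβ : 0 < β) (hγ : 0 < γ)
    (x : ℕ → X) (y : ℕ → Y) (z : ℕ → Z)
    -- the proximal AMA iterations
    (hx : ∀ (t : ℕ) (x' : X),
      f (x (t+1)) + ((-⟪z t, A (x (t+1))⟫ : ℝ) : EReal)
        ≤ f x' + ((-⟪z t, A x'⟫ : ℝ) : EReal))
    (hy : ∀ (t : ℕ) (y' : Y),
      g (y (t+1)) + ((-⟪z t, B (y (t+1))⟫ + β / 2 * ‖A (x (t+1)) + B (y (t+1)) - c‖ ^ 2
          + 1 / 2 * ⟪y (t+1) - y t, T (y (t+1) - y t)⟫ : ℝ) : EReal)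
        ≤ g y' + ((-⟪z t, B y'⟫ + β / 2 * ‖A (x (t+1)) + B y' - c‖ ^ 2
          + 1 / 2 * ⟪y' - y t, T (y' - y t)⟫ : ℝ) : EReal))
    (hz : ∀ t : ℕ, z (t+1) = z t - (γ * β) • (A (x (t+1)) + B (y (t+1)) - c))
    -- assumption A1 with an explicit triple `(x̄, ȳ, z̄)`
    (xb : X) (yb : Y) (zb : Z)
    (hA1f : IsSubgradAt f (ContinuousLinearMap.adjoint A zb) xb)
    (hA1g : IsSubgradAt g (ContinuousLinearMap.adjoint B zb) yb)
    (hA1c : A xb + B yb - c = 0)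
    (μ : ℝ) (hμ : 0 < μ) :
    ∀ (t : ℕ) (α : ℝ), 0 < α →
      (2 * ⟪x (t+1) - xb, Sf (x (t+1) - xb)⟫ - (β + μ) * ‖A (x (t+1) - xb)‖ ^ 2)
        + 2 * ⟪y (t+1) - yb, Sg (y (t+1) - yb)⟫
        + ⟪y (t+1) - y t, T (y (t+1) - y t)⟫
        + (β - α) * ‖B (y (t+1) - yb)‖ ^ 2
        + 1 / (γ ^ 2 * β) * (min α μ / (2 * β) + 1 - γ) * ‖z (t+1) - z t‖ ^ 2
      ≤ (1 / (γ * β) * ‖z t - zb‖ ^ 2 + ⟪y t - yb, T (y t - yb)⟫)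
        - (1 / (γ * β) * ‖z (t+1) - zb‖ ^ 2 + ⟪y (t+1) - yb, T (y (t+1) - yb)⟫) := by
  intro t α hα
  have hres : A (x (t+1)) + B (y (t+1)) - c = A (x (t+1) - xb) + B (y (t+1) - yb) := by
    rw [map_sub, map_sub, ← sub_eq_zero.1 hA1c]; abel
  have hsub_f : IsSubgradAt f (ContinuousLinearMap.adjoint A (z t)) (x (t+1)) :=
    isSubgradAt_of_forall_add_neg_inner_le fun u => by
      simpa only [ContinuousLinearMap.adjoint_inner_left] using hx t u
  have hsub_g := (hasGradientAt_proxAMA_subproblem B T hT_sa (z t) (A (x (t+1))) c (y t)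
    (y (t+1)) β).isSubgradAt_neg_of_forall_add_le hg_ne_bot hg_cvx (hy t)
  refine proxAMA_descent A B Sf Sg T hT_sa hα.le hβ.ne' hγ.ne' hμ.le (by rw [hz t, hres]) ?_ ?_
  · have := hf_mono _ _ _ _ hsub_f hA1f
    rwa [← map_sub, ContinuousLinearMap.adjoint_inner_left] at this
  · have := hg_mono _ _ _ _ hsub_g hA1g
    rwa [neg_sub, sub_right_comm, ← map_sub, inner_sub_left (ContinuousLinearMap.adjoint B _),
      ContinuousLinearMap.adjoint_inner_left, hres, sub_right_comm (z t)] at this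

/-- **The key one-step inequality for the proximal AMA (from the proof of Theorem 3.1).**
With `w_e^t = w^t − w̄` and `S = 2Σ_f − (β+μ)A*A`, for every `t ≥ 0` and `α > 0`,
`(1/(γβ)‖z_e^t‖² + ‖y_e^t‖²_T) − (1/(γβ)‖z_e^{t+1}‖² + ‖y_e^{t+1}‖²_T)
 ≥ ‖x_e^{t+1}‖²_S + 2‖y_e^{t+1}‖²_{Σg} + ‖y^{t+1}−y^t‖²_T + (β−α)‖By_e^{t+1}‖²
   + (1/(γ²β))(min{α,μ}/(2β) + 1 − γ)‖z^{t+1}−z^t‖²`. -/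
theorem stmt_1
    {X Y Z : Type*}
    [NormedAddCommGroup X] [InnerProductSpace ℝ X] [FiniteDimensional ℝ X]
    [NormedAddCommGroup Y] [InnerProductSpace ℝ Y] [FiniteDimensional ℝ Y]
    [NormedAddCommGroup Z] [InnerProductSpace ℝ Z] [FiniteDimensional ℝ Z]
    (f : X → EReal) (g : Y → EReal)
    -- `f` and `g` are proper
    (hf_ne_bot : ∀ x, f x ≠ ⊥) (hf_proper : ∃ x, f x ≠ ⊤)
    (hg_ne_bot : ∀ y, g y ≠ ⊥) (hg_proper : ∃ y, g y ≠ ⊤)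
    -- `f` and `g` are closed
    (hf_lsc : LowerSemicontinuous f) (hg_lsc : LowerSemicontinuous g)
    -- `f` and `g` are convex
    (hf_cvx : ∀ (x₁ x₂ : X) (a b : ℝ), 0 ≤ a → 0 ≤ b → a + b = 1 →
      f (a • x₁ + b • x₂) ≤ (a : EReal) * f x₁ + (b : EReal) * f x₂)
    (hg_cvx : ∀ (y₁ y₂ : Y) (a b : ℝ), 0 ≤ a → 0 ≤ b → a + b = 1 →
      g (a • y₁ + b • y₂) ≤ (a : EReal) * g y₁ + (b : EReal) * g y₂)
    (A : X →L[ℝ] Z) (B : Y →L[ℝ] Z) (c : Z)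
    (Sf : X →L[ℝ] X) (Sg : Y →L[ℝ] Y) (T : Y →L[ℝ] Y)
    -- `Sf ≻ 0`, `Sg ⪰ 0`, `T ⪰ 0` are self-adjoint
    (hSf_sa : ∀ u v : X, ⟪Sf u, v⟫ = ⟪u, Sf v⟫)
    (hSg_sa : ∀ u v : Y, ⟪Sg u, v⟫ = ⟪u, Sg v⟫)
    (hT_sa : ∀ u v : Y, ⟪T u, v⟫ = ⟪u, T v⟫)
    (hSf_pd : ∀ x : X, x ≠ 0 → 0 < ⟪x, Sf x⟫)
    (hSg_psd : ∀ y : Y, 0 ≤ ⟪y, Sg y⟫)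
    (hT_psd : ∀ y : Y, 0 ≤ ⟪y, T y⟫)
    -- the subdifferential monotonicity conditions on `f` and `g`
    (hf_mono : ∀ (x₁ x₂ u₁ u₂ : X), IsSubgradAt f u₁ x₁ → IsSubgradAt f u₂ x₂ →
      ⟪x₁ - x₂, Sf (x₁ - x₂)⟫ ≤ ⟪u₁ - u₂, x₁ - x₂⟫)
    (hg_mono : ∀ (y₁ y₂ v₁ v₂ : Y), IsSubgradAt g v₁ y₁ → IsSubgradAt g v₂ y₂ →
      ⟪y₁ - y₂, Sg (y₁ - y₂)⟫ ≤ ⟪v₁ - v₂, y₁ - y₂⟫)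
    (β γ : ℝ) (hβ : 0 < β) (hγ : 0 < γ)
    (x : ℕ → X) (y : ℕ → Y) (z : ℕ → Z)
    -- the proximal AMA iterations
    (hx : ∀ (t : ℕ) (x' : X),
      f (x (t+1)) + ((-⟪z t, A (x (t+1))⟫ : ℝ) : EReal)
        ≤ f x' + ((-⟪z t, A x'⟫ : ℝ) : EReal))
    (hy : ∀ (t : ℕ) (y' : Y),
      g (y (t+1)) + ((-⟪z t, B (y (t+1))⟫ + β / 2 * ‖A (x (t+1)) + B (y (t+1)) - c‖ ^ 2
          + 1 / 2 * ⟪y (t+1) - y t, T (y (t+1) - y t)⟫ : ℝ) : EReal)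
        ≤ g y' + ((-⟪z t, B y'⟫ + β / 2 * ‖A (x (t+1)) + B y' - c‖ ^ 2
          + 1 / 2 * ⟪y' - y t, T (y' - y t)⟫ : ℝ) : EReal))
    (hz : ∀ t : ℕ, z (t+1) = z t - (γ * β) • (A (x (t+1)) + B (y (t+1)) - c))
    -- assumption A1 with an explicit triple `(x̄, ȳ, z̄)`
    (xb : X) (yb : Y) (zb : Z)
    (hA1f : IsSubgradAt f (ContinuousLinearMap.adjoint A zb) xb)
    (hA1g : IsSubgradAt g (ContinuousLinearMap.adjoint B zb) yb)
    (hA1c : A xb + B yb - c = 0)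
    (μ : ℝ) (hμ : 0 < μ) :
    ∀ (t : ℕ) (α : ℝ), 0 < α →
      (2 * ⟪x (t+1) - xb, Sf (x (t+1) - xb)⟫ - (β + μ) * ‖A (x (t+1) - xb)‖ ^ 2)
        + 2 * ⟪y (t+1) - yb, Sg (y (t+1) - yb)⟫
        + ⟪y (t+1) - y t, T (y (t+1) - y t)⟫
        + (β - α) * ‖B (y (t+1) - yb)‖ ^ 2
        + 1 / (γ ^ 2 * β) * (min α μ / (2 * β) + 1 - γ) * ‖z (t+1) - z t‖ ^ 2
      ≤ (1 / (γ * β) * ‖z t - zb‖ ^ 2 + ⟪y t - yb, T (y t - yb)⟫)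
        - (1 / (γ * β) * ‖z (t+1) - zb‖ ^ 2 + ⟪y (t+1) - yb, T (y (t+1) - yb)⟫) :=
  stmt_1_general f g hg_ne_bot hg_cvx A B c Sf Sg T hT_sa hf_mono hg_mono β γ hβ hγ x y z hx hy hz
    xb yb zb hA1f hA1g hA1c μ hμ
end

section
/- Let {(x^t, y^t, z^t)} be generated by the proximal AMA, suppose assumption A1 holds, and suppose β>0, T ⪰ 0 and γ>0 are chosen so that (i) Σ_g + T + βB*B ≻ 0 and (ii) for some positive μ, δ, σ one has 2Σ_f − (β+μ)A*A ⪰ δI and γ + σ ≤ 1 + min{β,μ}/(2β). Let (x̄, ȳ, z̄) be the limit of {(x^t, y^t, z^t)} and define (x̄^N, ȳ^N) = (1/N)Σ_{t=1}^N (x^t, y^t). Then f(x̄^N) + g(ȳ^N) − f(x̄) − g(ȳ) ≤ (1/(2N))((1/(γβ))‖z⁰‖² + ‖y⁰ − ȳ‖²_T) + (1/N)·(β‖A‖²/(2δ) + max{γ−1, 0}/(2σ))·((1/(γβ))‖z⁰ − z̄‖² + ‖y⁰ − ȳ‖²_T). -/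
open RealInnerProductSpace Filter Topology

/-!
The optimality conditions of the two subproblems say that `A* zᵗ ∈ ∂f(xᵗ⁺¹)` and
`B* zᵗ - β B* eᵗ - T (yᵗ⁺¹ - yᵗ) ∈ ∂g(yᵗ⁺¹)`, where `eᵗ = A xᵗ⁺¹ + B yᵗ⁺¹ - c` is the residual.
Testing these subgradients at `(x̄, ȳ)` bounds the objective gap at step `t + 1` by the decrease of
`(‖zᵗ‖² / (γβ) + ‖yᵗ - ȳ‖²_T) / 2` plus multiples of `‖eᵗ‖²` and `‖xᵗ⁺¹ - x̄‖²`. Pairing them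
instead with the subgradients `A* z̄`, `B* z̄` at the solution, the monotonicity of `∂f` and `∂g`
and condition (ii) show that `‖zᵗ - z̄‖² / (γβ) + ‖yᵗ - ȳ‖²_T` decreases by at least
`δ ‖xᵗ⁺¹ - x̄‖² + σβ ‖eᵗ‖²`, so the error terms sum to at most its initial value. Jensen's
inequality for the ergodic averages converts the summed gaps into the bound.
-/

open Finset

def IsSubgradMonotone {E : Type*} [NormedAddCommGroup E] [InnerProductSpace ℝ E]
    (f : E → EReal) (S : E →L[ℝ] E) : Prop :=
  ∀ (x₁ x₂ u₁ u₂ : E), IsSubgradAt f u₁ x₁ → IsSubgradAt f u₂ x₂ →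
    ⟪x₁ - x₂, S (x₁ - x₂)⟫ ≤ ⟪u₁ - u₂, x₁ - x₂⟫

def ConvexEReal {E : Type*} [AddCommGroup E] [Module ℝ E] (f : E → EReal) : Prop :=
  ∀ (x₁ x₂ : E) (a b : ℝ), 0 ≤ a → 0 ≤ b → a + b = 1 →
    f (a • x₁ + b • x₂) ≤ (a : EReal) * f x₁ + (b : EReal) * f x₂

theorem EReal.ne_top_of_add_coe_le_add_coe {a b : EReal} {r s : ℝ} (hb : b ≠ ⊤)
    (h : a + r ≤ b + s) : a ≠ ⊤ := by
  rintro rfl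
  rw [EReal.top_add_coe, top_le_iff] at h
  exact EReal.add_ne_top hb (EReal.coe_ne_top s) h

namespace ConvexEReal

variable {E : Type*} [AddCommGroup E] [Module ℝ E] {f : E → EReal}

theorem convexOn_toReal (hbot : ∀ x, f x ≠ ⊥) (hf : ConvexEReal f) :
    ConvexOn ℝ {x | f x ≠ ⊤} fun x ↦ (f x).toReal := by
  have key : ∀ ⦃x₁⦄, f x₁ ≠ ⊤ → ∀ ⦃x₂⦄, f x₂ ≠ ⊤ → ∀ ⦃a b : ℝ⦄, 0 ≤ a → 0 ≤ b → a + b = 1 →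
      f (a • x₁ + b • x₂) ≤ ((a * (f x₁).toReal + b * (f x₂).toReal : ℝ) : EReal) := by
    intro x₁ h₁ x₂ h₂ a b ha hb hab
    have := hf x₁ x₂ a b ha hb hab
    rwa [← EReal.coe_toReal h₁ (hbot x₁), ← EReal.coe_toReal h₂ (hbot x₂), ← EReal.coe_mul,
      ← EReal.coe_mul, ← EReal.coe_add] at this
  refine ⟨fun x₁ h₁ x₂ h₂ a b ha hb hab ↦ ?_, fun x₁ h₁ x₂ h₂ a b ha hb hab ↦ ?_⟩
  · exact ne_top_of_le_ne_top (EReal.coe_ne_top _) (key h₁ h₂ ha hb hab)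
  · exact EReal.toReal_le_toReal (key h₁ h₂ ha hb hab) (hbot _) (EReal.coe_ne_top _) |>.trans_eq
      (EReal.toReal_coe _)

theorem map_average_le (hbot : ∀ x, f x ≠ ⊥) (hf : ConvexEReal f) {ι : Type*} {s : Finset ι}
    (hs : s.Nonempty) {p : ι → E} (hp : ∀ i ∈ s, f (p i) ≠ ⊤) :
    f ((#s : ℝ)⁻¹ • ∑ i ∈ s, p i) ≤ (((#s : ℝ)⁻¹ * ∑ i ∈ s, (f (p i)).toReal : ℝ) : EReal) := by
  have hconv := hf.convexOn_toReal hbot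
  have hw₀ : ∀ i ∈ s, (0 : ℝ) ≤ (#s : ℝ)⁻¹ := fun _ _ ↦ by positivity
  have hw₁ : ∑ _i ∈ s, (#s : ℝ)⁻¹ = 1 := by
    rw [sum_const, nsmul_eq_mul, mul_inv_cancel₀ (by exact_mod_cast hs.card_ne_zero)]
  have hmem := hconv.1.sum_mem hw₀ hw₁ hp
  have hle := hconv.map_sum_le hw₀ hw₁ hp
  rw [← smul_sum] at hmem hle
  rw [← EReal.coe_toReal hmem (hbot _), EReal.coe_le_coe_iff]
  simpa only [smul_eq_mul, ← mul_sum] using hle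

end ConvexEReal

namespace IsSubgradAt

variable {E : Type*} [NormedAddCommGroup E] [InnerProductSpace ℝ E] {f : E → EReal} {v x : E}

theorem ne_top (h : IsSubgradAt f v x) {u : E} (hu : f u ≠ ⊤) : f x ≠ ⊤ :=
  EReal.ne_top_of_add_coe_le_add_coe (s := 0) hu (by simpa using h u)

theorem toReal_le_add_inner (hbot : ∀ x, f x ≠ ⊥) (h : IsSubgradAt f v x) {u : E}
    (hu : f u ≠ ⊤) : (f x).toReal ≤ (f u).toReal + ⟪v, x - u⟫ := by
  have hx := h u
  rw [← EReal.coe_toReal (h.ne_top hu) (hbot x), ← EReal.coe_toReal hu (hbot u),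
    ← EReal.coe_add, EReal.coe_le_coe_iff] at hx
  rw [← neg_sub u x, inner_neg_right]
  linarith

end IsSubgradAt

theorem nonpos_of_forall_mem_Ioc_le_mul {a R : ℝ} (h : ∀ s ∈ Set.Ioc (0 : ℝ) 1, a ≤ s * R) :
    a ≤ 0 := by
  have hlim : Tendsto (fun s : ℝ ↦ s * R) (𝓝[>] 0) (𝓝 0) :=
    ((continuous_mul_const R).tendsto' 0 0 (zero_mul R)).mono_left nhdsWithin_le_nhds
  exact ge_of_tendsto hlim (eventually_of_mem (Ioc_mem_nhdsGT one_pos) h)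

theorem isSubgradAt_of_isMin_add {E : Type*} [NormedAddCommGroup E] [InnerProductSpace ℝ E]
    {g : E → EReal} (hbot : ∀ x, g x ≠ ⊥) (hg : ConvexEReal g) {q R : E → ℝ} {v ym : E}
    (hq : ∀ (d : E) (s : ℝ), q (ym + s • d) = q ym - s * ⟪v, d⟫ + s ^ 2 * R d)
    (hmin : ∀ u, g ym + (q ym : EReal) ≤ g u + (q u : EReal)) : IsSubgradAt g v ym := by
  intro u
  rcases eq_or_ne (g u) ⊤ with hu | hu
  · rw [hu]; exact le_top
  have hym : g ym ≠ ⊤ := EReal.ne_top_of_add_coe_le_add_coe hu (hmin u)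
  obtain ⟨a, ha⟩ : ∃ a : ℝ, g ym = a := ⟨_, (EReal.coe_toReal hym (hbot ym)).symm⟩
  obtain ⟨b, hb⟩ : ∃ b : ℝ, g u = b := ⟨_, (EReal.coe_toReal hu (hbot u)).symm⟩
  rw [ha, hb, ← EReal.coe_add, EReal.coe_le_coe_iff]
  suffices a + ⟪v, u - ym⟫ - b ≤ 0 by linarith
  -- Compare `ym` with the points `ym + s • (u - ym)` of the segment and let `s → 0`.
  refine nonpos_of_forall_mem_Ioc_le_mul (R := R (u - ym)) fun s ⟨hs₀, hs₁⟩ ↦ ?_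
  have hseg : (1 - s) • ym + s • u = ym + s • (u - ym) := by module
  have hcvx := hg ym u (1 - s) s (by linarith) hs₀.le (by ring)
  rw [hseg, ha, hb, ← EReal.coe_mul, ← EReal.coe_mul] at hcvx
  have hopt := (hmin (ym + s • (u - ym))).trans (add_le_add hcvx le_rfl)
  rw [hq, ha, ← EReal.coe_add, ← EReal.coe_add, ← EReal.coe_add, EReal.coe_le_coe_iff] at hopt
  have hstep : s * (a + ⟪v, u - ym⟫ - b) ≤ s * (s * R (u - ym)) := by linarith
  exact le_of_mul_le_mul_left hstep hs₀

theorem LinearMap.IsSymmetric.two_mul_inner_sub_sub {E : Type*} [NormedAddCommGroup E]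
    [InnerProductSpace ℝ E] {T : E →ₗ[ℝ] E} (hT : T.IsSymmetric) (a b c : E) :
    2 * ⟪T (a - b), a - c⟫ = ⟪a - c, T (a - c)⟫ - ⟪b - c, T (b - c)⟫ + ⟪a - b, T (a - b)⟫ := by
  have hab : a - b = (a - c) - (b - c) := by abel
  rw [hab]
  generalize a - c = p
  generalize b - c = q
  simp only [map_sub, inner_sub_left, inner_sub_right]
  rw [hT q p, real_inner_comm (T p) p, real_inner_comm (T p) q]
  linear_combination -(hT p q)

theorem norm_sub_smul_sq_real {E : Type*} [NormedAddCommGroup E] [InnerProductSpace ℝ E]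
    (u v : E) (s : ℝ) : ‖u - s • v‖ ^ 2 = ‖u‖ ^ 2 - 2 * s * ⟪u, v⟫ + s ^ 2 * ‖v‖ ^ 2 := by
  rw [norm_sub_sq_real, real_inner_smul_right, norm_smul, mul_pow, Real.norm_eq_abs, sq_abs]
  ring

theorem two_mul_inner_le_mul_norm_sq_add_div {E : Type*} [NormedAddCommGroup E]
    [InnerProductSpace ℝ E] (u v : E) {l : ℝ} (hl : 0 < l) :
    2 * ⟪u, v⟫ ≤ l * ‖u‖ ^ 2 + ‖v‖ ^ 2 / l := by
  have hsq : 0 ≤ (l * ‖u‖ - ‖v‖) ^ 2 / l := by positivity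
  have hcs := real_inner_le_norm u v
  have hexp : (l * ‖u‖ - ‖v‖) ^ 2 / l = l * ‖u‖ ^ 2 + ‖v‖ ^ 2 / l - 2 * (‖u‖ * ‖v‖) := by
    field_simp
    ring
  linarith

theorem min_div_two_mul_le_div_add {β μ : ℝ} (hβ : 0 < β) (hμ : 0 < μ) :
    min β μ / (2 * β) ≤ μ / (β + μ) := by
  rw [div_le_div_iff₀ (by positivity) (by positivity)]
  rcases le_total β μ with h | h
  · rw [min_eq_left h]; nlinarith
  · rw [min_eq_right h]; nlinarith

theorem sum_range_le_of_descent {a E D V L : ℕ → ℝ} {p q δ s : ℝ} (hp : 0 ≤ p) (hq : 0 ≤ q)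
    (hδ : 0 < δ) (hs : 0 < s) (hE : ∀ t, 0 ≤ E t) (hD : ∀ t, 0 ≤ D t) (hV : ∀ t, 0 ≤ V t)
    (hL : ∀ t, 0 ≤ L t) (ha : ∀ t, a t ≤ p * E t + q * D t + (V t - V (t + 1)))
    (hdesc : ∀ t, δ * D t + s * E t ≤ L t - L (t + 1)) (N : ℕ) :
    ∑ t ∈ range N, a t ≤ V 0 + (q / δ + p / s) * L 0 := by
  have hsum_a := sum_le_sum fun t (_ : t ∈ range N) ↦ ha t
  have hsum_desc := sum_le_sum fun t (_ : t ∈ range N) ↦ hdesc t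
  rw [sum_add_distrib, sum_add_distrib, ← mul_sum, ← mul_sum, sum_range_sub'] at hsum_a
  rw [sum_add_distrib, ← mul_sum, ← mul_sum, sum_range_sub'] at hsum_desc
  have hE_sum := sum_nonneg fun t (_ : t ∈ range N) ↦ hE t
  have hD_sum := sum_nonneg fun t (_ : t ∈ range N) ↦ hD t
  have hsE : s * ∑ t ∈ range N, E t ≤ L 0 := by linarith [mul_nonneg hδ.le hD_sum, hL N]
  have hδD : δ * ∑ t ∈ range N, D t ≤ L 0 := by linarith [mul_nonneg hs.le hE_sum, hL N]
  have hE_le : p * ∑ t ∈ range N, E t ≤ p / s * L 0 := calc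
    _ = p / s * (s * ∑ t ∈ range N, E t) := by field_simp
    _ ≤ p / s * L 0 := mul_le_mul_of_nonneg_left hsE (by positivity)
  have hD_le : q * ∑ t ∈ range N, D t ≤ q / δ * L 0 := calc
    _ = q / δ * (δ * ∑ t ∈ range N, D t) := by field_simp
    _ ≤ q / δ * L 0 := mul_le_mul_of_nonneg_left hδD (by positivity)
  linarith [hV N]

theorem sum_Icc_one_eq_sum_range_succ {M : Type*} [AddCommMonoid M] (F : ℕ → M) (N : ℕ) :
    ∑ t ∈ Icc 1 N, F t = ∑ t ∈ range N, F (t + 1) := by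
  rw [range_eq_Ico, sum_Ico_add', ← Ico_add_one_right_eq_Icc]

theorem inv_mul_sum_range_le_of_sum_sub_le {F : ℕ → ℝ} {m C : ℝ} {N : ℕ} (hN : 1 ≤ N)
    (h : ∑ t ∈ range N, (F t - m) ≤ C) : (N : ℝ)⁻¹ * ∑ t ∈ range N, F t ≤ m + C / N := by
  have hN' : (0 : ℝ) < N := by exact_mod_cast hN
  rw [sum_sub_distrib, sum_const, card_range, nsmul_eq_mul] at h
  rw [inv_mul_le_iff₀ hN', mul_add, mul_div_cancel₀ _ hN'.ne']
  linarith

namespace ProxAMA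

open ContinuousLinearMap

variable {X Y Z : Type*} [NormedAddCommGroup X] [InnerProductSpace ℝ X]
  [NormedAddCommGroup Y] [InnerProductSpace ℝ Y] [NormedAddCommGroup Z] [InnerProductSpace ℝ Z]
  [CompleteSpace Z]
  {A : X →L[ℝ] Z} {B : Y →L[ℝ] Z} {c : Z} {T : Y →L[ℝ] Y} {β : ℝ}

theorem isSubgradAt_of_isMin_x_step [CompleteSpace X] {f : X → EReal} (hbot : ∀ x, f x ≠ ⊥)
    (hf : ConvexEReal f) {z : Z} {x' : X}
    (hmin : ∀ u, f x' + ((-⟪z, A x'⟫ : ℝ) : EReal) ≤ f u + ((-⟪z, A u⟫ : ℝ) : EReal)) :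
    IsSubgradAt f (adjoint A z) x' :=
  isSubgradAt_of_isMin_add hbot hf (q := fun u ↦ -⟪z, A u⟫) (R := 0) (fun d s ↦ by
    simp only [map_add, map_smul, inner_add_right, real_inner_smul_right, adjoint_inner_left,
      Pi.zero_apply]
    ring) hmin

theorem isSubgradAt_of_isMin_y_step [CompleteSpace Y] {g : Y → EReal} (hbot : ∀ y, g y ≠ ⊥)
    (hg : ConvexEReal g) (hT : (T : Y →ₗ[ℝ] Y).IsSymmetric) {x' : X} {y y' : Y} {z : Z}
    (hmin : ∀ u, g y' + ((-⟪z, B y'⟫ + β / 2 * ‖A x' + B y' - c‖ ^ 2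
          + 1 / 2 * ⟪y' - y, T (y' - y)⟫ : ℝ) : EReal)
        ≤ g u + ((-⟪z, B u⟫ + β / 2 * ‖A x' + B u - c‖ ^ 2
          + 1 / 2 * ⟪u - y, T (u - y)⟫ : ℝ) : EReal)) :
    IsSubgradAt g (adjoint B z - β • adjoint B (A x' + B y' - c) - T (y' - y)) y' := by
  refine isSubgradAt_of_isMin_add hbot hg
    (q := fun u ↦ -⟪z, B u⟫ + β / 2 * ‖A x' + B u - c‖ ^ 2 + 1 / 2 * ⟪u - y, T (u - y)⟫)
    (R := fun d ↦ β / 2 * ‖B d‖ ^ 2 + 1 / 2 * ⟪d, T d⟫) (fun d s ↦ ?_) hmin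
  have hres : A x' + B (y' + s • d) - c = (A x' + B y' - c) + s • B d := by
    rw [map_add, map_smul]; abel
  have hstep : y' + s • d - y = (y' - y) + s • d := by abel
  have hsymm : ⟪y', T d⟫ - ⟪y, T d⟫ = ⟪T (y' - y), d⟫ := by
    rw [← inner_sub_left]; exact (hT (y' - y) d).symm
  have hsymm' : ⟪d, T (y' - y)⟫ = ⟪T (y' - y), d⟫ := real_inner_comm _ _
  rw [hres, hstep, norm_add_sq_real]
  simp only [map_add, map_smul, inner_add_left, inner_add_right, real_inner_smul_left,
    real_inner_smul_right, inner_sub_left, adjoint_inner_left, norm_smul, mul_pow,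
    Real.norm_eq_abs, sq_abs]
  linear_combination (s / 2) * hsymm + (s / 2) * hsymm'

theorem inner_subgrad_pair_eq [CompleteSpace X] [CompleteSpace Y]
    (hT : (T : Y →ₗ[ℝ] Y).IsSymmetric) {xb : X} {yb : Y} (hc : A xb + B yb = c) (w : Z)
    (x' : X) (y y' : Y) :
    ⟪adjoint A w, x' - xb⟫ + ⟪adjoint B w - β • adjoint B (A x' + B y' - c) - T (y' - y), y' - yb⟫
      = ⟪w, A x' + B y' - c⟫ - β * ‖A x' + B y' - c‖ ^ 2 + β * ⟪A x' + B y' - c, A (x' - xb)⟫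
        - (⟪y' - yb, T (y' - yb)⟫ - ⟪y - yb, T (y - yb)⟫ + ⟪y' - y, T (y' - y)⟫) / 2 := by
  set e := A x' + B y' - c with he
  have hres : A (x' - xb) + B (y' - yb) = e := by rw [he, map_sub, map_sub, ← hc]; abel
  have hw : ⟪w, A (x' - xb)⟫ + ⟪w, B (y' - yb)⟫ = ⟪w, e⟫ := by rw [← inner_add_right, hres]
  have heB : ⟪e, B (y' - yb)⟫ = ‖e‖ ^ 2 - ⟪e, A (x' - xb)⟫ := by
    rw [← real_inner_self_eq_norm_sq, ← inner_sub_right, ← hres, add_sub_cancel_left]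
  have hpol := hT.two_mul_inner_sub_sub y' y yb
  simp only [coe_coe] at hpol
  rw [adjoint_inner_left, inner_sub_left, inner_sub_left, real_inner_smul_left,
    adjoint_inner_left, adjoint_inner_left]
  linear_combination hw - β * heB - hpol / 2

variable [CompleteSpace X] [CompleteSpace Y] {f : X → EReal} {g : Y → EReal} {γ : ℝ}
  {xb : X} {yb : Y} {x' : X} {y y' : Y} {z z' : Z}

theorem objective_gap_le (hfbot : ∀ x, f x ≠ ⊥) (hgbot : ∀ y, g y ≠ ⊥)
    (hT : (T : Y →ₗ[ℝ] Y).IsSymmetric) (hT_psd : ∀ u, 0 ≤ ⟪u, T u⟫) (hβ : 0 < β) (hγ : 0 < γ)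
    (hc : A xb + B yb = c) (hfb : f xb ≠ ⊤) (hgb : g yb ≠ ⊤)
    (hz' : z' = z - (γ * β) • (A x' + B y' - c)) (hfx : IsSubgradAt f (adjoint A z) x')
    (hgy : IsSubgradAt g (adjoint B z - β • adjoint B (A x' + B y' - c) - T (y' - y)) y') :
    (f x').toReal + (g y').toReal - ((f xb).toReal + (g yb).toReal)
      ≤ max (γ - 1) 0 * β / 2 * ‖A x' + B y' - c‖ ^ 2 + β * ‖A‖ ^ 2 / 2 * ‖x' - xb‖ ^ 2
        + ((1 / (γ * β) * ‖z‖ ^ 2 + ⟪y - yb, T (y - yb)⟫) / 2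
          - (1 / (γ * β) * ‖z'‖ ^ 2 + ⟪y' - yb, T (y' - yb)⟫) / 2) := by
  set e := A x' + B y' - c
  have hf := hfx.toReal_le_add_inner hfbot hfb
  have hg := hgy.toReal_le_add_inner hgbot hgb
  have hid := inner_subgrad_pair_eq (β := β) hT hc z x' y y'
  have hdual : ⟪z, e⟫ = (1 / (γ * β) * ‖z‖ ^ 2 - 1 / (γ * β) * ‖z'‖ ^ 2) / 2
      + γ * β / 2 * ‖e‖ ^ 2 := by
    rw [hz', norm_sub_smul_sq_real]
    field_simp
    ring
  have hyoung := two_mul_inner_le_mul_norm_sq_add_div e (A (x' - xb)) one_pos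
  rw [one_mul, div_one] at hyoung
  have hA : ‖A (x' - xb)‖ ^ 2 ≤ ‖A‖ ^ 2 * ‖x' - xb‖ ^ 2 := by
    rw [← mul_pow]; gcongr; exact A.le_opNorm _
  have hmax : (γ - 1) * (β / 2 * ‖e‖ ^ 2) ≤ max (γ - 1) 0 * (β / 2 * ‖e‖ ^ 2) :=
    mul_le_mul_of_nonneg_right (le_max_left _ _) (by positivity)
  linarith [mul_le_mul_of_nonneg_left hyoung hβ.le, mul_le_mul_of_nonneg_left hA hβ.le,
    hT_psd (y' - y)]

theorem monotone_step_le {Sf : X →L[ℝ] X} {Sg : Y →L[ℝ] Y} {μ δ : ℝ} {zb : Z}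
    (hf_mono : IsSubgradMonotone f Sf) (hg_mono : IsSubgradMonotone g Sg)
    (hSg_psd : ∀ u, 0 ≤ ⟪u, Sg u⟫) (hT : (T : Y →ₗ[ℝ] Y).IsSymmetric)
    (hT_psd : ∀ u, 0 ≤ ⟪u, T u⟫)
    (hSf : ∀ w, δ * ‖w‖ ^ 2 ≤ 2 * ⟪w, Sf w⟫ - (β + μ) * ‖A w‖ ^ 2) (hc : A xb + B yb = c)
    (hfx : IsSubgradAt f (adjoint A z) x')
    (hgy : IsSubgradAt g (adjoint B z - β • adjoint B (A x' + B y' - c) - T (y' - y)) y')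
    (hfxb : IsSubgradAt f (adjoint A zb) xb) (hgyb : IsSubgradAt g (adjoint B zb) yb) :
    δ * ‖x' - xb‖ ^ 2 + (β + μ) * ‖A (x' - xb)‖ ^ 2 + 2 * β * ‖A x' + B y' - c‖ ^ 2
        - 2 * β * ⟪A x' + B y' - c, A (x' - xb)⟫
        + (⟪y' - yb, T (y' - yb)⟫ - ⟪y - yb, T (y - yb)⟫)
      ≤ 2 * ⟪z - zb, A x' + B y' - c⟫ := by
  have hmf := hf_mono _ _ _ _ hfx hfxb
  have hmg := hg_mono _ _ _ _ hgy hgyb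
  rw [← map_sub] at hmf
  rw [show adjoint B z - β • adjoint B (A x' + B y' - c) - T (y' - y) - adjoint B zb
      = adjoint B (z - zb) - β • adjoint B (A x' + B y' - c) - T (y' - y) by
    rw [map_sub (adjoint B) z zb]; abel] at hmg
  have hid := inner_subgrad_pair_eq (β := β) hT hc (z - zb) x' y y'
  linarith [hSf (x' - xb), hSg_psd (y' - yb), hT_psd (y' - y)]

theorem lyapunov_decrease {Sf : X →L[ℝ] X} {Sg : Y →L[ℝ] Y} {μ δ σ : ℝ} {zb : Z}
    (hf_mono : IsSubgradMonotone f Sf) (hg_mono : IsSubgradMonotone g Sg)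
    (hSg_psd : ∀ u, 0 ≤ ⟪u, Sg u⟫) (hT : (T : Y →ₗ[ℝ] Y).IsSymmetric)
    (hT_psd : ∀ u, 0 ≤ ⟪u, T u⟫) (hβ : 0 < β) (hγ : 0 < γ) (hμ : 0 < μ)
    (hSf : ∀ w, δ * ‖w‖ ^ 2 ≤ 2 * ⟪w, Sf w⟫ - (β + μ) * ‖A w‖ ^ 2)
    (hγσ : γ + σ ≤ 1 + min β μ / (2 * β)) (hc : A xb + B yb = c)
    (hz' : z' = z - (γ * β) • (A x' + B y' - c)) (hfx : IsSubgradAt f (adjoint A z) x')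
    (hgy : IsSubgradAt g (adjoint B z - β • adjoint B (A x' + B y' - c) - T (y' - y)) y')
    (hfxb : IsSubgradAt f (adjoint A zb) xb) (hgyb : IsSubgradAt g (adjoint B zb) yb) :
    δ * ‖x' - xb‖ ^ 2 + σ * β * ‖A x' + B y' - c‖ ^ 2
      ≤ (1 / (γ * β) * ‖z - zb‖ ^ 2 + ⟪y - yb, T (y - yb)⟫)
        - (1 / (γ * β) * ‖z' - zb‖ ^ 2 + ⟪y' - yb, T (y' - yb)⟫) := by
  set e := A x' + B y' - c
  have hmono := monotone_step_le hf_mono hg_mono hSg_psd hT hT_psd hSf hc hfx hgy hfxb hgyb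
  have hdual : 2 * ⟪z - zb, e⟫ = 1 / (γ * β) * ‖z - zb‖ ^ 2 - 1 / (γ * β) * ‖z' - zb‖ ^ 2
      + γ * β * ‖e‖ ^ 2 := by
    rw [show z' - zb = (z - zb) - (γ * β) • e by rw [hz']; abel, norm_sub_smul_sq_real]
    field_simp
    ring
  set k := μ / (β + μ)
  -- Young's inequality with weight `(β + μ) / β` cancels the `‖A (x' - xb)‖²` term of `hmono`.
  have hyoung :
      2 * β * ⟪e, A (x' - xb)⟫ ≤ (β + μ) * ‖A (x' - xb)‖ ^ 2 + β * (1 - k) * ‖e‖ ^ 2 := by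
    have h := two_mul_inner_le_mul_norm_sq_add_div (A (x' - xb)) e
      (show 0 < (β + μ) / β by positivity)
    rw [real_inner_comm] at h
    have hl : β * ((β + μ) / β * ‖A (x' - xb)‖ ^ 2 + ‖e‖ ^ 2 / ((β + μ) / β))
        = (β + μ) * ‖A (x' - xb)‖ ^ 2 + β * (1 - k) * ‖e‖ ^ 2 := by
      simp only [k]; field_simp; ring
    have hβh := mul_le_mul_of_nonneg_left h hβ.le
    rw [hl] at hβh
    linarith
  have hσ : 0 ≤ (1 + k - γ - σ) * (β * ‖e‖ ^ 2) :=
    mul_nonneg (by linarith [min_div_two_mul_le_div_add hβ hμ]) (by positivity)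
  linarith [hT_psd (y' - y)]

end ProxAMA

theorem stmt_4_general
    {X Y Z : Type*}
    [NormedAddCommGroup X] [InnerProductSpace ℝ X] [FiniteDimensional ℝ X]
    [NormedAddCommGroup Y] [InnerProductSpace ℝ Y] [FiniteDimensional ℝ Y]
    [NormedAddCommGroup Z] [InnerProductSpace ℝ Z] [FiniteDimensional ℝ Z]
    (f : X → EReal) (g : Y → EReal)
    -- `f` and `g` are proper
    (hf_ne_bot : ∀ x, f x ≠ ⊥) (hf_proper : ∃ x, f x ≠ ⊤)
    (hg_ne_bot : ∀ y, g y ≠ ⊥) (hg_proper : ∃ y, g y ≠ ⊤)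
    -- `f` and `g` are convex
    (hf_cvx : ∀ (x₁ x₂ : X) (a b : ℝ), 0 ≤ a → 0 ≤ b → a + b = 1 →
      f (a • x₁ + b • x₂) ≤ (a : EReal) * f x₁ + (b : EReal) * f x₂)
    (hg_cvx : ∀ (y₁ y₂ : Y) (a b : ℝ), 0 ≤ a → 0 ≤ b → a + b = 1 →
      g (a • y₁ + b • y₂) ≤ (a : EReal) * g y₁ + (b : EReal) * g y₂)
    (A : X →L[ℝ] Z) (B : Y →L[ℝ] Z) (c : Z)
    (Sf : X →L[ℝ] X) (Sg : Y →L[ℝ] Y) (T : Y →L[ℝ] Y)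
    -- `Sf ≻ 0`, `Sg ⪰ 0`, `T ⪰ 0` are self-adjoint
    (hT_sa : ∀ u v : Y, ⟪T u, v⟫ = ⟪u, T v⟫)
    (hSg_psd : ∀ y : Y, 0 ≤ ⟪y, Sg y⟫)
    (hT_psd : ∀ y : Y, 0 ≤ ⟪y, T y⟫)
    -- the subdifferential monotonicity conditions on `f` and `g`
    (hf_mono : ∀ (x₁ x₂ u₁ u₂ : X), IsSubgradAt f u₁ x₁ → IsSubgradAt f u₂ x₂ →
      ⟪x₁ - x₂, Sf (x₁ - x₂)⟫ ≤ ⟪u₁ - u₂, x₁ - x₂⟫)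
    (hg_mono : ∀ (y₁ y₂ v₁ v₂ : Y), IsSubgradAt g v₁ y₁ → IsSubgradAt g v₂ y₂ →
      ⟪y₁ - y₂, Sg (y₁ - y₂)⟫ ≤ ⟪v₁ - v₂, y₁ - y₂⟫)
    (β γ : ℝ) (hβ : 0 < β) (hγ : 0 < γ)
    (x : ℕ → X) (y : ℕ → Y) (z : ℕ → Z)
    -- the proximal AMA iterations
    (hx : ∀ (t : ℕ) (x' : X),
      f (x (t+1)) + ((-⟪z t, A (x (t+1))⟫ : ℝ) : EReal)
        ≤ f x' + ((-⟪z t, A x'⟫ : ℝ) : EReal))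
    (hy : ∀ (t : ℕ) (y' : Y),
      g (y (t+1)) + ((-⟪z t, B (y (t+1))⟫ + β / 2 * ‖A (x (t+1)) + B (y (t+1)) - c‖ ^ 2
          + 1 / 2 * ⟪y (t+1) - y t, T (y (t+1) - y t)⟫ : ℝ) : EReal)
        ≤ g y' + ((-⟪z t, B y'⟫ + β / 2 * ‖A (x (t+1)) + B y' - c‖ ^ 2
          + 1 / 2 * ⟪y' - y t, T (y' - y t)⟫ : ℝ) : EReal))
    (hz : ∀ t : ℕ, z (t+1) = z t - (γ * β) • (A (x (t+1)) + B (y (t+1)) - c))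
    (μ δ σ : ℝ) (hμ : 0 < μ) (hδ : 0 < δ) (hσ : 0 < σ)
    -- condition (ii): `2Σf − (β+μ)A*A ⪰ δI` and `γ + σ ≤ 1 + min{β,μ}/(2β)`
    (hcond2 : ∀ w : X, δ * ‖w‖ ^ 2 ≤ 2 * ⟪w, Sf w⟫ - (β + μ) * ‖A w‖ ^ 2)
    (hcond3 : γ + σ ≤ 1 + min β μ / (2 * β))
    -- `(x̄, ȳ, z̄)` is the limit of the iterates guaranteed by the convergence theorem
    (xb : X) (yb : Y) (zb : Z)
    (hA1f : IsSubgradAt f (ContinuousLinearMap.adjoint A zb) xb)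
    (hA1g : IsSubgradAt g (ContinuousLinearMap.adjoint B zb) yb)
    (hA1c : A xb + B yb - c = 0) :
    ∀ N : ℕ, 1 ≤ N →
      f ((N : ℝ)⁻¹ • ∑ t ∈ Finset.Icc 1 N, x t)
          + g ((N : ℝ)⁻¹ • ∑ t ∈ Finset.Icc 1 N, y t)
        ≤ f xb + g yb +
          ((1 / (2 * N) * (1 / (γ * β) * ‖z 0‖ ^ 2 + ⟪y 0 - yb, T (y 0 - yb)⟫)
            + 1 / N * (β * ‖A‖ ^ 2 / (2 * δ) + max (γ - 1) 0 / (2 * σ))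
              * (1 / (γ * β) * ‖z 0 - zb‖ ^ 2 + ⟪y 0 - yb, T (y 0 - yb)⟫) : ℝ) : EReal) := by
  intro N hN
  have hc : A xb + B yb = c := sub_eq_zero.mp hA1c
  have hfb : f xb ≠ ⊤ := hA1f.ne_top hf_proper.choose_spec
  have hgb : g yb ≠ ⊤ := hA1g.ne_top hg_proper.choose_spec
  have hsubf t := ProxAMA.isSubgradAt_of_isMin_x_step hf_ne_bot hf_cvx (hx t)
  have hsubg t := ProxAMA.isSubgradAt_of_isMin_y_step hg_ne_bot hg_cvx hT_sa (hy t)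
  have hsum := sum_range_le_of_descent (by positivity) (by positivity) hδ (mul_pos hσ hβ)
    (fun _ ↦ sq_nonneg _) (fun _ ↦ sq_nonneg _)
    (fun _ ↦ div_nonneg (add_nonneg (by positivity) (hT_psd _)) zero_le_two)
    (fun _ ↦ add_nonneg (by positivity) (hT_psd _))
    (fun t ↦ ProxAMA.objective_gap_le hf_ne_bot hg_ne_bot hT_sa hT_psd hβ hγ hc hfb hgb (hz t)
      (hsubf t) (hsubg t))
    (fun t ↦ ProxAMA.lyapunov_decrease hf_mono hg_mono hSg_psd hT_sa hT_psd hβ hγ hμ hcond2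
      hcond3 hc (hz t) (hsubf t) (hsubg t) hA1f hA1g) N
  have hne : (range N).Nonempty := nonempty_range_iff.2 (by omega)
  have hJf := ConvexEReal.map_average_le hf_ne_bot hf_cvx hne fun t _ ↦ (hsubf t).ne_top hfb
  have hJg := ConvexEReal.map_average_le hg_ne_bot hg_cvx hne fun t _ ↦ (hsubg t).ne_top hgb
  rw [card_range] at hJf hJg
  rw [sum_Icc_one_eq_sum_range_succ, sum_Icc_one_eq_sum_range_succ]
  calc _ ≤ _ := add_le_add hJf hJg
    _ = _ := by rw [← EReal.coe_add, ← mul_add, ← sum_add_distrib]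
    _ ≤ _ := EReal.coe_le_coe_iff.2 (inv_mul_sum_range_le_of_sum_sub_le hN hsum)
    _ = _ := by
      conv_rhs => rw [← EReal.coe_toReal hfb (hf_ne_bot xb), ← EReal.coe_toReal hgb (hg_ne_bot yb)]
      rw [← EReal.coe_add, ← EReal.coe_add, EReal.coe_eq_coe_iff]
      field_simp

/-- **Iteration complexity of the proximal AMA: upper objective bound (Theorem 3.2,
upper bound in (fvalbd)).** For the ergodic averages
`(x̄^N, ȳ^N) = (1/N)Σ_{t=1}^N (x^t, y^t)` one has
`f(x̄^N) + g(ȳ^N) − f(x̄) − g(ȳ)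
  ≤ (1/(2N))((1/(γβ))‖z⁰‖² + ‖y⁰ − ȳ‖²_T)
    + (1/N)(β‖A‖²/(2δ) + max{γ−1,0}/(2σ))((1/(γβ))‖z⁰ − z̄‖² + ‖y⁰ − ȳ‖²_T)`. -/
theorem stmt_4
    {X Y Z : Type*}
    [NormedAddCommGroup X] [InnerProductSpace ℝ X] [FiniteDimensional ℝ X]
    [NormedAddCommGroup Y] [InnerProductSpace ℝ Y] [FiniteDimensional ℝ Y]
    [NormedAddCommGroup Z] [InnerProductSpace ℝ Z] [FiniteDimensional ℝ Z]
    (f : X → EReal) (g : Y → EReal)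
    -- `f` and `g` are proper
    (hf_ne_bot : ∀ x, f x ≠ ⊥) (hf_proper : ∃ x, f x ≠ ⊤)
    (hg_ne_bot : ∀ y, g y ≠ ⊥) (hg_proper : ∃ y, g y ≠ ⊤)
    -- `f` and `g` are closed
    (hf_lsc : LowerSemicontinuous f) (hg_lsc : LowerSemicontinuous g)
    -- `f` and `g` are convex
    (hf_cvx : ∀ (x₁ x₂ : X) (a b : ℝ), 0 ≤ a → 0 ≤ b → a + b = 1 →
      f (a • x₁ + b • x₂) ≤ (a : EReal) * f x₁ + (b : EReal) * f x₂)
    (hg_cvx : ∀ (y₁ y₂ : Y) (a b : ℝ), 0 ≤ a → 0 ≤ b → a + b = 1 →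
      g (a • y₁ + b • y₂) ≤ (a : EReal) * g y₁ + (b : EReal) * g y₂)
    (A : X →L[ℝ] Z) (B : Y →L[ℝ] Z) (c : Z)
    (Sf : X →L[ℝ] X) (Sg : Y →L[ℝ] Y) (T : Y →L[ℝ] Y)
    -- `Sf ≻ 0`, `Sg ⪰ 0`, `T ⪰ 0` are self-adjoint
    (hSf_sa : ∀ u v : X, ⟪Sf u, v⟫ = ⟪u, Sf v⟫)
    (hSg_sa : ∀ u v : Y, ⟪Sg u, v⟫ = ⟪u, Sg v⟫)
    (hT_sa : ∀ u v : Y, ⟪T u, v⟫ = ⟪u, T v⟫)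
    (hSf_pd : ∀ x : X, x ≠ 0 → 0 < ⟪x, Sf x⟫)
    (hSg_psd : ∀ y : Y, 0 ≤ ⟪y, Sg y⟫)
    (hT_psd : ∀ y : Y, 0 ≤ ⟪y, T y⟫)
    -- the subdifferential monotonicity conditions on `f` and `g`
    (hf_mono : ∀ (x₁ x₂ u₁ u₂ : X), IsSubgradAt f u₁ x₁ → IsSubgradAt f u₂ x₂ →
      ⟪x₁ - x₂, Sf (x₁ - x₂)⟫ ≤ ⟪u₁ - u₂, x₁ - x₂⟫)
    (hg_mono : ∀ (y₁ y₂ v₁ v₂ : Y), IsSubgradAt g v₁ y₁ → IsSubgradAt g v₂ y₂ →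
      ⟪y₁ - y₂, Sg (y₁ - y₂)⟫ ≤ ⟪v₁ - v₂, y₁ - y₂⟫)
    (β γ : ℝ) (hβ : 0 < β) (hγ : 0 < γ)
    (x : ℕ → X) (y : ℕ → Y) (z : ℕ → Z)
    -- the proximal AMA iterations
    (hx : ∀ (t : ℕ) (x' : X),
      f (x (t+1)) + ((-⟪z t, A (x (t+1))⟫ : ℝ) : EReal)
        ≤ f x' + ((-⟪z t, A x'⟫ : ℝ) : EReal))
    (hy : ∀ (t : ℕ) (y' : Y),
      g (y (t+1)) + ((-⟪z t, B (y (t+1))⟫ + β / 2 * ‖A (x (t+1)) + B (y (t+1)) - c‖ ^ 2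
          + 1 / 2 * ⟪y (t+1) - y t, T (y (t+1) - y t)⟫ : ℝ) : EReal)
        ≤ g y' + ((-⟪z t, B y'⟫ + β / 2 * ‖A (x (t+1)) + B y' - c‖ ^ 2
          + 1 / 2 * ⟪y' - y t, T (y' - y t)⟫ : ℝ) : EReal))
    (hz : ∀ t : ℕ, z (t+1) = z t - (γ * β) • (A (x (t+1)) + B (y (t+1)) - c))
    -- assumption A1
    (hA1 : ∃ (x1 : X) (y1 : Y) (z1 : Z),
      IsSubgradAt f (ContinuousLinearMap.adjoint A z1) x1 ∧
      IsSubgradAt g (ContinuousLinearMap.adjoint B z1) y1 ∧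
      A x1 + B y1 - c = 0)
    -- condition (i): `Σg + T + βB*B ≻ 0`
    (hcond1 : ∀ w : Y, w ≠ 0 → 0 < ⟪w, Sg w⟫ + ⟪w, T w⟫ + β * ‖B w‖ ^ 2)
    (μ δ σ : ℝ) (hμ : 0 < μ) (hδ : 0 < δ) (hσ : 0 < σ)
    -- condition (ii): `2Σf − (β+μ)A*A ⪰ δI` and `γ + σ ≤ 1 + min{β,μ}/(2β)`
    (hcond2 : ∀ w : X, δ * ‖w‖ ^ 2 ≤ 2 * ⟪w, Sf w⟫ - (β + μ) * ‖A w‖ ^ 2)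
    (hcond3 : γ + σ ≤ 1 + min β μ / (2 * β))
    -- `(x̄, ȳ, z̄)` is the limit of the iterates guaranteed by the convergence theorem
    (xb : X) (yb : Y) (zb : Z)
    (hlimx : Tendsto x atTop (𝓝 xb)) (hlimy : Tendsto y atTop (𝓝 yb))
    (hlimz : Tendsto z atTop (𝓝 zb))
    (hA1f : IsSubgradAt f (ContinuousLinearMap.adjoint A zb) xb)
    (hA1g : IsSubgradAt g (ContinuousLinearMap.adjoint B zb) yb)
    (hA1c : A xb + B yb - c = 0) :
    ∀ N : ℕ, 1 ≤ N →
      f ((N : ℝ)⁻¹ • ∑ t ∈ Finset.Icc 1 N, x t)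
          + g ((N : ℝ)⁻¹ • ∑ t ∈ Finset.Icc 1 N, y t)
        ≤ f xb + g yb +
          ((1 / (2 * N) * (1 / (γ * β) * ‖z 0‖ ^ 2 + ⟪y 0 - yb, T (y 0 - yb)⟫)
            + 1 / N * (β * ‖A‖ ^ 2 / (2 * δ) + max (γ - 1) 0 / (2 * σ))
              * (1 / (γ * β) * ‖z 0 - zb‖ ^ 2 + ⟪y 0 - yb, T (y 0 - yb)⟫) : ℝ) : EReal) :=
  stmt_4_general f g hf_ne_bot hf_proper hg_ne_bot hg_proper hf_cvx hg_cvx A B c Sf Sg T hT_sa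
    hSg_psd hT_psd hf_mono hg_mono β γ hβ hγ x y z hx hy hz μ δ σ hμ hδ hσ hcond2 hcond3 xb yb zb
    hA1f hA1g hA1c
end
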